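/- arXiv:1402.0177 — 4 statements merged into one kernel-verified Lean document; each statement's English description precedes it below -/
import Mathlib

section
/- Let G be a nontrivial connected graph of order n. Then the local metric dimension of G equals n−1 if and only if G is the complete graph K_n. -/
open SimpleGraph

/-- A set `S` is a local metric generator for `G` if every pair of adjacent
vertices is distinguished, by distance, by some element of `S`. -/
def IsLocalMetricGenerator {V : Type*} (G : SimpleGraph V) (S : Set V) : Prop :=
  ∀ ⦃u v : V⦄, G.Adj u v → ∃ w ∈ S, G.dist u w ≠ G.dist v w

/-- The local metric dimension of a graph. -/
noncomputable def localMetricDim {V : Type*} [Fintype V] (G : SimpleGraph V) : ℕ :=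
  sInf {k | ∃ S : Finset V, IsLocalMetricGenerator G ↑S ∧ S.card = k}

/-- A local metric basis: a local metric generator of minimum cardinality. -/
def IsLocalMetricBasis {V : Type*} [Fintype V] (G : SimpleGraph V) (S : Finset V) : Prop :=
  IsLocalMetricGenerator G ↑S ∧ S.card = localMetricDim G

/-!
A vertex distinguishes itself from each of its neighbours (distance `0` against `1`), so the
complement of an independent set is a local metric generator. If `G` is not complete, two
non-adjacent vertices form an independent set, whence `dim_l(G) ≤ n - 2`. Conversely, in `K_n`
a vertex other than `u` and `v` is at distance `1` from both, so every local metric generator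
misses at most one vertex, whence `dim_l(K_n) ≥ n - 1`.
-/

namespace SimpleGraph

variable {V : Type*} {G : SimpleGraph V}

lemma dist_self_ne_dist_of_adj {u v : V} (h : G.Adj u v) : G.dist u u ≠ G.dist v u := by
  rw [dist_self, dist_eq_one_iff_adj.mpr h.symm]
  exact zero_ne_one

lemma isLocalMetricGenerator_compl_of_isIndepSet {I : Set V} (hI : G.IsIndepSet I) :
    IsLocalMetricGenerator G Iᶜ := by
  intro u v huv
  by_cases hu : u ∈ I
  · have hv : v ∉ I := fun hv => hI hu hv huv.ne huv
    exact ⟨v, hv, (dist_self_ne_dist_of_adj huv.symm).symm⟩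
  · exact ⟨u, hu, dist_self_ne_dist_of_adj huv⟩

lemma IsLocalMetricGenerator.isIndepSet_compl_of_eq_top {S : Set V}
    (hS : IsLocalMetricGenerator (⊤ : SimpleGraph V) S) : (⊤ : SimpleGraph V).IsIndepSet Sᶜ := by
  intro u hu v hv huv hadj
  obtain ⟨w, hw, hdist⟩ := hS hadj
  have hwu : u ≠ w := fun h => hu (h ▸ hw)
  have hwv : v ≠ w := fun h => hv (h ▸ hw)
  exact hdist <| by rw [dist_eq_one_iff_adj.mpr hwu, dist_eq_one_iff_adj.mpr hwv]

variable [Fintype V]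

lemma localMetricDim_le_card {S : Finset V} (hS : IsLocalMetricGenerator G S) :
    localMetricDim G ≤ S.card :=
  Nat.sInf_le ⟨S, hS, rfl⟩

lemma le_localMetricDim {k : ℕ} (h : ∀ S : Finset V, IsLocalMetricGenerator G S → k ≤ S.card) :
    k ≤ localMetricDim G := by
  have huniv : IsLocalMetricGenerator G (Finset.univ : Finset V) := fun u _ huv =>
    ⟨u, Finset.mem_coe.mpr (Finset.mem_univ u), dist_self_ne_dist_of_adj huv⟩
  refine le_csInf ⟨_, Finset.univ, huniv, rfl⟩ ?_
  rintro _ ⟨S, hS, rfl⟩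
  exact h S hS

lemma localMetricDim_le_card_sub_card_of_isIndepSet [DecidableEq V] {I : Finset V}
    (hI : G.IsIndepSet I) : localMetricDim G ≤ Fintype.card V - I.card := by
  rw [← Finset.card_compl]
  exact localMetricDim_le_card (by simpa using isLocalMetricGenerator_compl_of_isIndepSet hI)

lemma localMetricDim_le_card_sub_one : localMetricDim G ≤ Fintype.card V - 1 := by
  classical
  cases isEmpty_or_nonempty V with
  | inl _ => simpa using localMetricDim_le_card_sub_card_of_isIndepSet (G := G) (I := ∅) (by simp)
  | inr h =>
    obtain ⟨v⟩ := h
    simpa using localMetricDim_le_card_sub_card_of_isIndepSet (G := G) (I := {v}) (by simp)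

lemma card_sub_one_le_localMetricDim_top :
    Fintype.card V - 1 ≤ localMetricDim (⊤ : SimpleGraph V) := by
  classical
  refine le_localMetricDim fun S hS => ?_
  have hcompl : Sᶜ.card ≤ 1 := Finset.card_le_one.mpr fun u hu v hv => by
    by_contra huv
    exact hS.isIndepSet_compl_of_eq_top (by simpa using hu) (by simpa using hv) huv huv
  rw [Finset.card_compl] at hcompl
  omega

end SimpleGraph

theorem localMetricDim_eq_card_sub_one_iff_general {V : Type*} [Fintype V]
    (G : SimpleGraph V) :
    localMetricDim G = Fintype.card V - 1 ↔ G = ⊤ := by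
  classical
  refine ⟨fun hdim => ?_, fun hG => hG ▸ le_antisymm localMetricDim_le_card_sub_one
    card_sub_one_le_localMetricDim_top⟩
  by_contra hne
  obtain ⟨u, v, huv, hnadj⟩ : ∃ u v : V, u ≠ v ∧ ¬ G.Adj u v := by
    by_contra! hcomplete
    exact hne (eq_top_iff.mpr fun x y hxy => hcomplete x y hxy)
  have hpair : G.IsIndepSet ↑({u, v} : Finset V) := by
    simpa [Set.pairwise_insert, huv, hnadj] using fun h => hnadj h.symm
  have hle := localMetricDim_le_card_sub_card_of_isIndepSet hpair
  have hcard := Finset.card_le_univ ({u, v} : Finset V)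
  rw [Finset.card_pair huv] at hle hcard
  omega

/-- Let G be a nontrivial connected graph of order n. Then dim_l(G) = n - 1
iff G is the complete graph K_n. -/
theorem localMetricDim_eq_card_sub_one_iff {V : Type*} [Fintype V] [Nontrivial V]
    (G : SimpleGraph V) (hG : G.Connected) :
    localMetricDim G = Fintype.card V - 1 ↔ G = ⊤ :=
  localMetricDim_eq_card_sub_one_iff_general G
end

section
/- Let G be a nontrivial connected graph. Then the local metric dimension of G equals 1 if and only if G is bipartite. -/
/-!
Distances from a fixed vertex `w` to the two ends of an edge differ by at most one. So if `w`
alone distinguishes every edge, they differ by exactly one along every edge, and the parity of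
the distance to `w` is a proper 2-colouring. Conversely, in a connected 2-coloured graph the
parity of `dist u w` records whether `u` and `w` have the same colour, so any single vertex
distinguishes every edge. A graph with an edge has no empty local metric generator, hence
`dim_l(G) = 1` exactly when some single vertex is a local metric generator.
-/

open SimpleGraph

lemma Nat.sInf_eq_one_iff_of_zero_notMem {s : Set ℕ} (hs : 0 ∉ s) : sInf s = 1 ↔ 1 ∈ s := by
  have hpos : sInf s ≠ 0 ↔ s.Nonempty := by
    simp [Nat.sInf_eq_zero, hs, Set.nonempty_iff_ne_empty]
  refine ⟨fun h => h ▸ Nat.sInf_mem (hpos.mp (by omega)), fun h => ?_⟩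
  have := hpos.mpr ⟨1, h⟩
  have := Nat.sInf_le h
  omega

namespace SimpleGraph

variable {V : Type*} {G : SimpleGraph V}

lemma Coloring.even_dist_iff_congr (c : G.Coloring Bool) {u v : V} (h : G.Reachable u v) :
    Even (G.dist u v) ↔ (c u ↔ c v) := by
  obtain ⟨p, hp⟩ := h.exists_walk_length_eq_dist
  exact hp ▸ c.even_length_iff_congr p

lemma isLocalMetricGenerator_singleton_iff {w : V} :
    IsLocalMetricGenerator G {w} ↔ ∀ ⦃u v : V⦄, G.Adj u v → G.dist u w ≠ G.dist v w := by
  simp [IsLocalMetricGenerator]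

lemma not_isLocalMetricGenerator_empty {u v : V} (h : G.Adj u v) :
    ¬IsLocalMetricGenerator G ∅ :=
  fun hS => by simpa using hS h

lemma localMetricDim_eq_one_iff_exists_singleton [Fintype V] {u v : V} (h : G.Adj u v) :
    localMetricDim G = 1 ↔ ∃ w, IsLocalMetricGenerator G {w} := by
  rw [localMetricDim, Nat.sInf_eq_one_iff_of_zero_notMem]
  · simp [Finset.card_eq_one]
  · rintro ⟨S, hS, hcard⟩
    rw [Finset.card_eq_zero.mp hcard, Finset.coe_empty] at hS
    exact not_isLocalMetricGenerator_empty h hS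

lemma colorable_two_of_isLocalMetricGenerator_singleton {w : V}
    (hw : IsLocalMetricGenerator G {w}) : G.Colorable 2 := by
  let c : G.Coloring Bool := Coloring.mk (fun v => Even (G.dist w v)) fun {u v} huv => by
    have hne : G.dist w u ≠ G.dist w v := by
      simpa only [dist_comm] using isLocalMetricGenerator_singleton_iff.mp hw huv
    rcases huv.diff_dist_adj (u := w) with h | h | h <;> grind
  simpa using c.colorable

lemma Colorable.isLocalMetricGenerator_singleton (hG : G.Connected) (hc : G.Colorable 2)
    (w : V) : IsLocalMetricGenerator G {w} := by
  let c : G.Coloring Bool := recolorOfEquiv G finTwoEquiv hc.some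
  refine isLocalMetricGenerator_singleton_iff.mpr fun u v huv hdist => c.valid huv ?_
  have hu := c.even_dist_iff_congr (hG u w)
  have hv := c.even_dist_iff_congr (hG v w)
  rw [hdist] at hu
  grind

end SimpleGraph

/-- Let G be a nontrivial connected graph. Then dim_l(G) = 1 iff G is bipartite. -/
theorem localMetricDim_eq_one_iff {V : Type*} [Fintype V] [Nontrivial V]
    (G : SimpleGraph V) (hG : G.Connected) :
    localMetricDim G = 1 ↔ G.Colorable 2 := by
  obtain ⟨u⟩ := hG.nonempty
  obtain ⟨v, huv⟩ := hG.preconnected.exists_adj_of_nontrivial u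
  rw [localMetricDim_eq_one_iff_exists_singleton huv]
  exact ⟨fun ⟨_, hw⟩ => colorable_two_of_isLocalMetricGenerator_singleton hw,
    fun hc => ⟨u, hc.isLocalMetricGenerator_singleton hG u⟩⟩
end

section
/- Let H be a connected graph of order n′ with clique number ω(H) = n′−1. Then every vertex of H belongs to some local metric basis of H. -/
open SimpleGraph

/-! Let `u` be the vertex outside a maximum clique, so that all other vertices are pairwise
adjacent, and let `a`, `b` be a neighbour and a non-neighbour of `u`. Any two non-adjacent
vertices have `a` as a common neighbour, so distances are `0`, `1`, `2` and a third vertex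
separates two adjacent ones exactly when it is adjacent to only one of them. Two clique
vertices can therefore be separated only by `u`, and only when exactly one of them is adjacent
to `u`; hence a local metric generator misses at most two vertices. On the other hand the
complements of `{a, b}` and of `{u, c}`, for every clique vertex `c`, are local metric
generators, and every vertex lies in one of them. -/

open Finset

namespace SimpleGraph

variable {V : Type*} {G : SimpleGraph V} {u a x y w : V}

theorem dist_eq_two_of_commonNeighbors_nonempty (hxy : x ≠ y) (h : ¬G.Adj x y)
    (hc : (G.commonNeighbors x y).Nonempty) : G.dist x y = 2 := by
  rw [dist, edist_eq_two_iff.mpr ⟨hxy, h, hc⟩]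
  rfl

theorem dist_ne_dist_iff_of_ne
    (hdiam : ∀ ⦃x y : V⦄, x ≠ y → ¬G.Adj x y → (G.commonNeighbors x y).Nonempty)
    (hwx : w ≠ x) (hwy : w ≠ y) :
    G.dist x w ≠ G.dist y w ↔ ¬(G.Adj x w ↔ G.Adj y w) := by
  have hone : ∀ ⦃z⦄, G.Adj z w → G.dist z w = 1 := fun _ ↦ dist_eq_one_iff_adj.mpr
  have htwo : ∀ ⦃z⦄, z ≠ w → ¬G.Adj z w → G.dist z w = 2 := fun _ hz h ↦
    dist_eq_two_of_commonNeighbors_nonempty hz h (hdiam hz h)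
  by_cases hx : G.Adj x w <;> by_cases hy : G.Adj y w <;>
    simp [hx, hy, hone, htwo hwx.symm, htwo hwy.symm]

theorem commonNeighbors_nonempty_of_isClique_compl_singleton
    (hK : G.IsClique ({u}ᶜ : Set V)) (ha : G.Adj u a) :
    ∀ ⦃x y : V⦄, x ≠ y → ¬G.Adj x y → (G.commonNeighbors x y).Nonempty := by
  intro x y hxy h
  have ha_mem : ∀ ⦃y⦄, y ≠ u → ¬G.Adj u y → a ∈ G.commonNeighbors u y := fun y hy huy ↦
    G.mem_commonNeighbors.mpr ⟨ha, hK hy ha.ne.symm fun e ↦ huy (e ▸ ha)⟩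
  by_cases hx : x = u
  · subst hx
    exact ⟨a, ha_mem hxy.symm h⟩
  · obtain rfl : y = u := by
      by_contra hy
      exact h (hK hx hy hxy)
    rw [commonNeighbors_symm]
    exact ⟨a, ha_mem hx fun h' ↦ h h'.symm⟩

theorem IsClique.exists_ne_not_adj_of_cliqueNum_lt [Fintype V] (hK : G.IsClique ({u}ᶜ : Set V))
    (h : G.cliqueNum < Fintype.card V) : ∃ b, b ≠ u ∧ ¬G.Adj u b := by
  classical
  by_contra! hall
  have huniv : G.IsClique (univ : Finset V) := by
    intro x _ y _ hxy
    by_cases hx : x = u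
    · exact hx ▸ hall y (hx ▸ hxy.symm)
    by_cases hy : y = u
    · exact (hy ▸ hall x (hy ▸ hxy)).symm
    exact hK hx hy hxy
  have := huniv.card_le_cliqueNum
  simp only [card_univ] at this
  omega

theorem exists_isClique_compl_singleton_of_cliqueNum [Fintype V] [Nonempty V]
    (h : G.cliqueNum = Fintype.card V - 1) : ∃ u, G.IsClique ({u}ᶜ : Set V) := by
  classical
  obtain ⟨K, hK⟩ := G.exists_isNClique_cliqueNum
  have hcard : #Kᶜ = 1 := by
    have := Fintype.card_pos (α := V)
    rw [card_compl, hK.card_eq, h]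
    omega
  obtain ⟨u, hu⟩ := card_eq_one.mp hcard
  refine ⟨u, ?_⟩
  rw [← compl_compl K, hu] at hK
  simpa using hK.isClique

end SimpleGraph

section

variable {V : Type*} {G : SimpleGraph V} {S : Set V} {u a x y : V}

theorem exists_dist_ne_of_adj_of_mem (h : G.Adj x y) (hx : x ∈ S) :
    ∃ w ∈ S, G.dist x w ≠ G.dist y w :=
  ⟨x, hx, by rw [dist_self, dist_comm, dist_eq_one_iff_adj.mpr h]; exact zero_ne_one⟩

theorem isLocalMetricGenerator_iff_of_commonNeighbors_nonempty
    (hdiam : ∀ ⦃x y : V⦄, x ≠ y → ¬G.Adj x y → (G.commonNeighbors x y).Nonempty) :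
    IsLocalMetricGenerator G S ↔
      ∀ ⦃x y⦄, G.Adj x y → x ∉ S → y ∉ S → ∃ w ∈ S, ¬(G.Adj x w ↔ G.Adj y w) := by
  constructor
  · intro hS x y h hx hy
    obtain ⟨w, hw, hne⟩ := hS h
    exact ⟨w, hw, (dist_ne_dist_iff_of_ne hdiam (ne_of_mem_of_not_mem hw hx)
      (ne_of_mem_of_not_mem hw hy)).mp hne⟩
  · intro hS x y h
    by_cases hx : x ∈ S
    · exact exists_dist_ne_of_adj_of_mem h hx
    by_cases hy : y ∈ S
    · obtain ⟨w, hw, hne⟩ := exists_dist_ne_of_adj_of_mem h.symm hy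
      exact ⟨w, hw, hne.symm⟩
    obtain ⟨w, hw, hne⟩ := hS h hx hy
    exact ⟨w, hw, (dist_ne_dist_iff_of_ne hdiam (ne_of_mem_of_not_mem hw hx)
      (ne_of_mem_of_not_mem hw hy)).mpr hne⟩

theorem isLocalMetricGenerator_compl_pair [Fintype V] [DecidableEq V]
    (hdiam : ∀ ⦃x y : V⦄, x ≠ y → ¬G.Adj x y → (G.commonNeighbors x y).Nonempty)
    (hsep : G.Adj x y → ∃ w, w ≠ x ∧ w ≠ y ∧ ¬(G.Adj x w ↔ G.Adj y w)) :
    IsLocalMetricGenerator G ↑({x, y}ᶜ : Finset V) := by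
  rw [isLocalMetricGenerator_iff_of_commonNeighbors_nonempty hdiam]
  intro p q h hp hq
  simp only [coe_compl, coe_pair, Set.mem_compl_iff, Set.mem_insert_iff,
    Set.mem_singleton_iff, not_not] at hp hq ⊢
  rcases hp with rfl | rfl <;> rcases hq with rfl | rfl
  · exact (G.irrefl h).elim
  · obtain ⟨w, hwp, hwq, hne⟩ := hsep h
    exact ⟨w, by simp [hwp, hwq], hne⟩
  · obtain ⟨w, hwq, hwp, hne⟩ := hsep h.symm
    exact ⟨w, by simp [hwp, hwq], fun e ↦ hne e.symm⟩
  · exact (G.irrefl h).elim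

theorem isLocalMetricBasis_of_forall_card_le [Fintype V] {S : Finset V}
    (hS : IsLocalMetricGenerator G ↑S)
    (hmin : ∀ T : Finset V, IsLocalMetricGenerator G ↑T → #S ≤ #T) : IsLocalMetricBasis G S :=
  ⟨hS, le_antisymm (le_csInf ⟨_, S, hS, rfl⟩ (by rintro _ ⟨T, hT, rfl⟩; exact hmin T hT))
    (Nat.sInf_le ⟨S, hS, rfl⟩)⟩

theorem IsLocalMetricGenerator.mem_and_not_adj_iff_of_not_mem (hS : IsLocalMetricGenerator G S)
    (hK : G.IsClique ({u}ᶜ : Set V)) (ha : G.Adj u a) (hx : x ≠ u) (hy : y ≠ u) (hxy : x ≠ y)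
    (hxS : x ∉ S) (hyS : y ∉ S) : u ∈ S ∧ ¬(G.Adj x u ↔ G.Adj y u) := by
  obtain ⟨w, hw, hne⟩ := (isLocalMetricGenerator_iff_of_commonNeighbors_nonempty
    (commonNeighbors_nonempty_of_isClique_compl_singleton hK ha)).mp hS
    (hK hx hy hxy) hxS hyS
  obtain rfl : w = u := by
    by_contra hwu
    exact hne (iff_of_true (hK hx hwu (ne_of_mem_of_not_mem hw hxS).symm)
      (hK hy hwu (ne_of_mem_of_not_mem hw hyS).symm))
  exact ⟨hw, hne⟩

theorem IsLocalMetricGenerator.card_compl_le_two [Fintype V] [DecidableEq V] {S : Finset V}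
    (hS : IsLocalMetricGenerator G ↑S) (hK : G.IsClique ({u}ᶜ : Set V)) (ha : G.Adj u a) :
    #Sᶜ ≤ 2 := by
  by_cases hu : u ∈ S
  · have hinj : Set.InjOn (G.Adj · u) ↑Sᶜ := by
      intro x hx y hy hxy
      simp only [coe_compl, Set.mem_compl_iff, mem_coe] at hx hy
      by_contra hne
      exact (hS.mem_and_not_adj_iff_of_not_mem hK ha (ne_of_mem_of_not_mem hu hx).symm
        (ne_of_mem_of_not_mem hu hy).symm hne hx hy).2 (iff_of_eq hxy)
    calc #Sᶜ ≤ #(univ : Finset Prop) := card_le_card_of_injOn _ (fun _ _ ↦ mem_univ _) hinj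
      _ = 2 := by simp
  · have : #(Sᶜ.erase u) ≤ 1 := card_le_one.mpr fun x hx y hy ↦ by
      by_contra hxy
      simp only [mem_erase, mem_compl] at hx hy
      exact hu (hS.mem_and_not_adj_iff_of_not_mem hK ha hx.1 hy.1 hxy hx.2 hy.2).1
    have := pred_card_le_card_erase (s := Sᶜ) (a := u)
    omega

theorem isLocalMetricBasis_compl_pair [Fintype V] [DecidableEq V]
    (hK : G.IsClique ({u}ᶜ : Set V)) (ha : G.Adj u a) (hxy : x ≠ y)
    (hS : IsLocalMetricGenerator G ↑({x, y}ᶜ : Finset V)) : IsLocalMetricBasis G {x, y}ᶜ :=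
  isLocalMetricBasis_of_forall_card_le hS fun T hT ↦ by
    have hcompl := hT.card_compl_le_two hK ha
    rw [card_compl] at hcompl
    rw [card_compl, card_pair hxy]
    have := card_le_univ T
    omega

end

/-- If H is a connected graph of order n' with clique number n' - 1, then every
vertex of H belongs to some local metric basis of H. -/
theorem mem_localMetricBasis_of_cliqueNum {V : Type*} [Fintype V]
    (H : SimpleGraph V) (hH : H.Connected)
    (hclique : H.cliqueNum = Fintype.card V - 1) :
    ∀ v : V, ∃ B : Finset V, IsLocalMetricBasis H B ∧ v ∈ B := by
  classical
  intro v
  have := hH.nonempty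
  obtain ⟨u, hK⟩ := exists_isClique_compl_singleton_of_cliqueNum hclique
  obtain ⟨b, hbu, hub⟩ :=
    hK.exists_ne_not_adj_of_cliqueNum_lt (hclique ▸ Nat.sub_lt Fintype.card_pos one_pos)
  have : Nontrivial V := ⟨⟨b, u, hbu⟩⟩
  obtain ⟨a, ha⟩ := hH.preconnected.exists_adj_of_nontrivial u
  have hab : a ≠ b := fun h ↦ hub (h ▸ ha)
  have hdiam := commonNeighbors_nonempty_of_isClique_compl_singleton hK ha
  by_cases hvu : v = u
  · refine ⟨{a, b}ᶜ, isLocalMetricBasis_compl_pair hK ha hab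
      (isLocalMetricGenerator_compl_pair hdiam fun _ ↦ ⟨u, ha.ne, hbu.symm, ?_⟩), ?_⟩
    · simpa [ha.symm] using fun h ↦ hub h.symm
    · simp [hvu, ha.ne, hbu.symm]
  · obtain ⟨c, hc, hcv⟩ := exists_mem_ne (by rw [card_pair hab]; omega) v
    have hcu : c ≠ u := by
      rcases mem_insert.mp hc with rfl | hc
      · exact ha.ne.symm
      · exact mem_singleton.mp hc ▸ hbu
    refine ⟨{u, c}ᶜ, isLocalMetricBasis_compl_pair hK ha hcu.symm
      (isLocalMetricGenerator_compl_pair hdiam fun huc ↦ ⟨b, hbu, ?_, ?_⟩), ?_⟩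
    · rintro rfl
      exact hub huc
    · simpa [hub] using hK hcu hbu fun e ↦ hub (e ▸ huc)
    · simp [hvu, hcv.symm]
end

section
/- Let H = ⟨v⟩ + (K_r ∪ K_s) with r ≥ 2, s ≥ 2 be the join of a single vertex v with the disjoint union of two complete graphs K_r and K_s, a graph of order n′ = r+s+1. Then dim_l(H) = n′−3, and v does not belong to any local metric basis of H. -/
/-!
The apex `v` is adjacent to every other vertex, so `H` has diameter two and the distance between
two distinct vertices only records whether they are adjacent. Two vertices of the same clique
therefore have the same distance to every third vertex: their edge is resolved only by themselves,
and a local metric generator misses at most one vertex of each clique. It thus misses at most three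
vertices, and at most two if it contains `v`. Conversely, omitting `v` and one vertex `x` from
each clique leaves a generator: the edge `v x` is resolved by any vertex of the other clique.
-/
open SimpleGraph

/-- The graph ⟨v⟩ + (K_r ∪ K_s): a vertex (`none`) joined to the disjoint
union of two complete graphs K_r and K_s. -/
def oneJoinTwoCliques (r s : ℕ) : SimpleGraph (Option (Fin r ⊕ Fin s)) :=
  SimpleGraph.fromRel (fun a b => match a, b with
    | none, some _ => True
    | some (.inl _), some (.inl _) => True
    | some (.inr _), some (.inr _) => True
    | _, _ => False)

namespace SimpleGraph

variable {V : Type*} {G : SimpleGraph V} {c u v w : V}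

lemma dist_eq_two_of_forall_adj (hc : ∀ x ≠ c, G.Adj c x) (hne : u ≠ w) (hnadj : ¬G.Adj u w) :
    G.dist u w = 2 := by
  have huc : u ≠ c := by rintro rfl; exact hnadj (hc w hne.symm)
  have hwc : w ≠ c := by rintro rfl; exact hnadj (hc u hne).symm
  have hle : G.dist u w ≤ 2 := dist_le (.cons (hc u huc).symm (.cons (hc w hwc) .nil))
  have hlt : 1 < G.dist u w :=
    ((hc u huc).symm.reachable.trans (hc w hwc).reachable).one_lt_dist_of_ne_of_not_adj hne hnadj
  omega

lemma dist_eq_dist_of_forall_adj (hc : ∀ x ≠ c, G.Adj c x) (huw : u ≠ w) (hvw : v ≠ w)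
    (hadj : G.Adj u w ↔ G.Adj v w) : G.dist u w = G.dist v w := by
  by_cases h : G.Adj u w
  · rw [dist_eq_one_iff_adj.mpr h, dist_eq_one_iff_adj.mpr (hadj.mp h)]
  · rw [dist_eq_two_of_forall_adj hc huw h, dist_eq_two_of_forall_adj hc hvw (hadj.not.mp h)]

end SimpleGraph

section LocalMetricGenerator

variable {V : Type*} {G : SimpleGraph V} {S : Set V} {u v : V}

lemma IsLocalMetricGenerator.mem_or_mem (hS : IsLocalMetricGenerator G S) (huv : G.Adj u v)
    (hdist : ∀ w, w ≠ u → w ≠ v → G.dist u w = G.dist v w) : u ∈ S ∨ v ∈ S := by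
  obtain ⟨w, hwS, hne⟩ := hS huv
  by_contra! h
  exact hne (hdist w (fun hwu => h.1 (hwu ▸ hwS)) (fun hwv => h.2 (hwv ▸ hwS)))

lemma isLocalMetricGenerator_of_forall_adj_notMem
    (h : ∀ ⦃u v⦄, G.Adj u v → u ∉ S → v ∉ S → ∃ w ∈ S, G.dist u w ≠ G.dist v w) :
    IsLocalMetricGenerator G S := by
  intro u v huv
  by_cases hu : u ∈ S
  · refine ⟨u, hu, ?_⟩
    rw [dist_self, dist_comm, dist_eq_one_iff_adj.mpr huv]
    exact zero_ne_one
  by_cases hv : v ∈ S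
  · refine ⟨v, hv, ?_⟩
    rw [dist_self, dist_eq_one_iff_adj.mpr huv]
    exact one_ne_zero
  exact h huv hu hv

lemma localMetricDim_eq [Fintype V] {k : ℕ} {S : Finset V} (hS : IsLocalMetricGenerator G S)
    (hcard : S.card = k) (hmin : ∀ T : Finset V, IsLocalMetricGenerator G T → k ≤ T.card) :
    localMetricDim G = k :=
  IsLeast.csInf_eq ⟨⟨S, hS, hcard⟩, by rintro _ ⟨T, hT, rfl⟩; exact hmin T hT⟩

end LocalMetricGenerator

namespace oneJoinTwoCliques

variable {r s : ℕ}

lemma adj_none_some (x : Fin r ⊕ Fin s) : (oneJoinTwoCliques r s).Adj none (some x) := by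
  simp [oneJoinTwoCliques]

lemma adj_some_some {x y : Fin r ⊕ Fin s} :
    (oneJoinTwoCliques r s).Adj (some x) (some y) ↔ x ≠ y ∧ x.isLeft = y.isLeft := by
  rcases x with x | x <;> rcases y with y | y <;> simp [oneJoinTwoCliques]

lemma dist_some_eq_dist_some {x y : Fin r ⊕ Fin s} (hxy : x.isLeft = y.isLeft)
    {w : Option (Fin r ⊕ Fin s)} (hwx : w ≠ some x) (hwy : w ≠ some y) :
    (oneJoinTwoCliques r s).dist (some x) w = (oneJoinTwoCliques r s).dist (some y) w := by
  refine dist_eq_dist_of_forall_adj (c := none) ?_ hwx.symm hwy.symm ?_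
  · rintro (_ | z) hz
    · exact absurd rfl hz
    · exact adj_none_some z
  · rcases w with _ | z
    · exact ⟨fun _ => (adj_none_some y).symm, fun _ => (adj_none_some x).symm⟩
    · have hzx : x ≠ z := fun h => hwx (by rw [h])
      have hzy : y ≠ z := fun h => hwy (by rw [h])
      simp only [adj_some_some, hxy, hzx, hzy, ne_eq, not_false_eq_true, true_and]

lemma card_compl_erase_none_le_two {S : Finset (Option (Fin r ⊕ Fin s))}
    (hS : IsLocalMetricGenerator (oneJoinTwoCliques r s) S) : (Sᶜ.erase none).card ≤ 2 := by
  -- `Option.any Sum.isLeft` separates the two cliques, and twins cannot both avoid `S`.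
  have hinj : Set.InjOn (Option.any Sum.isLeft)
      (Sᶜ.erase none : Set (Option (Fin r ⊕ Fin s))) := by
    rintro (_ | x) hx (_ | y) hy hxy
    · simp at hx
    · simp at hx
    · simp at hy
    by_contra hne
    have hxy' : x ≠ y := fun h => hne (by rw [h])
    simp only [Finset.mem_coe, Finset.mem_erase, Finset.mem_compl] at hx hy
    have huv := adj_some_some.mpr ⟨hxy', by simpa using hxy⟩
    rcases hS.mem_or_mem huv (fun w hwx hwy => dist_some_eq_dist_some (by simpa using hxy) hwx hwy)
      with h | h
    · exact hx.2 h
    · exact hy.2 h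
  simpa using Finset.card_le_card_of_injOn _ (fun _ _ => Finset.mem_univ _) hinj

lemma card_sub_two_le_card_erase_none {S : Finset (Option (Fin r ⊕ Fin s))}
    (hS : IsLocalMetricGenerator (oneJoinTwoCliques r s) S) : r + s - 2 ≤ (S.erase none).card := by
  have hcompl : (S.erase none)ᶜ.card ≤ 3 := calc
    _ ≤ (insert none (Sᶜ.erase none)).card :=
      Finset.card_le_card fun x hx => by by_cases h : x = none <;> simp_all
    _ ≤ (Sᶜ.erase none).card + 1 := Finset.card_insert_le _ _
    _ ≤ 3 := by have := card_compl_erase_none_le_two hS; omega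
  rw [Finset.card_compl, Fintype.card_option, Fintype.card_sum, Fintype.card_fin,
    Fintype.card_fin] at hcompl
  omega

lemma dist_none_ne_dist_some {x y : Fin r ⊕ Fin s} (hxy : x.isLeft ≠ y.isLeft) :
    (oneJoinTwoCliques r s).dist none (some y) ≠
      (oneJoinTwoCliques r s).dist (some x) (some y) := by
  rw [dist_eq_one_iff_adj.mpr (adj_none_some y), ne_comm, Ne, dist_eq_one_iff_adj, adj_some_some]
  exact fun h => hxy h.2

lemma isLocalMetricGenerator_compl {a : Fin r} {b : Fin s} (hr : 2 ≤ r) (hs : 2 ≤ s) :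
    IsLocalMetricGenerator (oneJoinTwoCliques r s)
      ↑({none, some (.inl a), some (.inr b)} : Finset (Option (Fin r ⊕ Fin s)))ᶜ := by
  set T : Finset (Option (Fin r ⊕ Fin s)) := {none, some (.inl a), some (.inr b)}ᶜ with hT
  have : Nontrivial (Fin r) := Fin.nontrivial_iff_two_le.mpr hr
  have : Nontrivial (Fin s) := Fin.nontrivial_iff_two_le.mpr hs
  obtain ⟨a', ha'⟩ := exists_ne a
  obtain ⟨b', hb'⟩ := exists_ne b
  have hnone_inl : ∃ w ∈ (T : Set _),
      (oneJoinTwoCliques r s).dist none w ≠ (oneJoinTwoCliques r s).dist (some (.inl a)) w :=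
    ⟨some (.inr b'), by simp [hT, hb'], dist_none_ne_dist_some (by simp)⟩
  have hnone_inr : ∃ w ∈ (T : Set _),
      (oneJoinTwoCliques r s).dist none w ≠ (oneJoinTwoCliques r s).dist (some (.inr b)) w :=
    ⟨some (.inl a'), by simp [hT, ha'], dist_none_ne_dist_some (by simp)⟩
  refine isLocalMetricGenerator_of_forall_adj_notMem fun u v huv hu hv => ?_
  simp only [hT, Finset.coe_compl, Set.mem_compl_iff, not_not, Finset.coe_insert,
    Finset.coe_singleton, Set.mem_insert_iff, Set.mem_singleton_iff] at hu hv
  rcases hu with rfl | rfl | rfl <;> rcases hv with rfl | rfl | rfl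
  all_goals first
    | exact absurd huv (by simp [adj_some_some])
    | exact hnone_inl
    | exact hnone_inr
    | simpa only [ne_comm] using hnone_inl
    | simpa only [ne_comm] using hnone_inr

end oneJoinTwoCliques

open oneJoinTwoCliques in
/-- For H = ⟨v⟩ + (K_r ∪ K_s), r, s ≥ 2, of order n' = r + s + 1, we have
dim_l(H) = n' - 3 and the vertex v belongs to no local metric basis of H. -/
theorem localMetricDim_oneJoinTwoCliques (r s : ℕ) (hr : 2 ≤ r) (hs : 2 ≤ s) :
    localMetricDim (oneJoinTwoCliques r s) = (r + s + 1) - 3 ∧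
      ∀ B : Finset (Option (Fin r ⊕ Fin s)),
        IsLocalMetricBasis (oneJoinTwoCliques r s) B → none ∉ B := by
  let a : Fin r := ⟨0, by omega⟩
  let b : Fin s := ⟨0, by omega⟩
  have hcard : ({none, some (.inl a), some (.inr b)} : Finset (Option (Fin r ⊕ Fin s)))ᶜ.card
      = r + s + 1 - 3 := by
    rw [Finset.card_compl]
    simp
  have hmin (S : Finset (Option (Fin r ⊕ Fin s)))
      (hS : IsLocalMetricGenerator (oneJoinTwoCliques r s) S) : r + s + 1 - 3 ≤ S.card := by
    have := card_sub_two_le_card_erase_none hS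
    have : (S.erase none).card ≤ S.card := Finset.card_erase_le
    omega
  have hdim := localMetricDim_eq (isLocalMetricGenerator_compl hr hs) hcard hmin
  refine ⟨hdim, fun B ⟨hB, hBcard⟩ hnone => ?_⟩
  have hlower := card_sub_two_le_card_erase_none hB
  rw [Finset.card_erase_of_mem hnone, hBcard, hdim] at hlower
  omega
end
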